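/- Let α, β, δ, ν, γ > 0, let a < b be real numbers and T > 0. Suppose p, u, c, v, ω : ℝ × ℝ → ℝ are smooth functions that satisfy, for all (x,t) ∈ [a,b] × (0,T), the one-dimensional relaxed friction-type system: ∂_t p + (1/α) ∂_x u = 0; ∂_t u + (3/2) u ∂_x u + ∂_x p + c ∂_x( W′(c) + c/β ) = (1/β) c ∂_x ω + ν ∂_xx u; ∂_t c + ∂_x(c u) + ∂_x v = 0; ∂_t v + (1/δ) ∂_x( W′(c) + c/β ) = −(1/δ) v + (1/(δβ)) ∂_x ω; together with the elliptic constraint −γ ∂_xx ω + (1/β) ω = (1/β) c. Assume the boundary conditions u(a,t) = u(b,t) = 0, v(a,t) = v(b,t) = 0 and ∂_x ω(a,t) = ∂_x ω(b,t) = 0 for all t ∈ (0,T). Then for every t ∈ (0,T), the function t ↦ ∫_a^b [ (α/2) p² + (1/2) u² + (δ/2) v² + W(c) + (1/(2β)) (c − ω)² + (γ/2) (∂_x ω)² ] dx has derivative equal to −∫_a^b ( v² + ν (∂_x u)² ) dx; in particular this derivative is ≤ 0. -/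

import Mathlib

/-- Spatial partial derivative of a function of `(x, t) ∈ ℝ × ℝ`. -/
noncomputable def dX (f : ℝ × ℝ → ℝ) (z : ℝ × ℝ) : ℝ := fderiv ℝ f z (1, 0)

/-- Time partial derivative of a function of `(x, t) ∈ ℝ × ℝ`. -/
noncomputable def dT (f : ℝ × ℝ → ℝ) (z : ℝ × ℝ) : ℝ := fderiv ℝ f z (0, 1)

lemma slice_hasDerivAt_T {f : ℝ × ℝ → ℝ} (hf : ContDiff ℝ (⊤ : ℕ∞) f) (x t : ℝ) :
    HasDerivAt (fun s => f (x, s)) (dT f (x, t)) t := by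
  have h1 : HasFDerivAt f (fderiv ℝ f (x, t)) (x, t) :=
    (hf.differentiable (by simp) (x, t)).hasFDerivAt
  have h2 : HasDerivAt (fun s : ℝ => ((x, s) : ℝ × ℝ)) (0, 1) t :=
    (hasDerivAt_const t x).prodMk (hasDerivAt_id t)
  exact h1.comp_hasDerivAt t h2

lemma slice_hasDerivAt_X {f : ℝ × ℝ → ℝ} (hf : ContDiff ℝ (⊤ : ℕ∞) f) (x t : ℝ) :
    HasDerivAt (fun y => f (y, t)) (dX f (x, t)) x := by
  have h1 : HasFDerivAt f (fderiv ℝ f (x, t)) (x, t) :=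
    (hf.differentiable (by simp) (x, t)).hasFDerivAt
  have h2 : HasDerivAt (fun y : ℝ => ((y, t) : ℝ × ℝ)) (1, 0) x :=
    (hasDerivAt_id x).prodMk (hasDerivAt_const x t)
  exact h1.comp_hasDerivAt x h2

lemma contDiff_dX {f : ℝ × ℝ → ℝ} (hf : ContDiff ℝ (⊤ : ℕ∞) f) : ContDiff ℝ (⊤ : ℕ∞) (dX f) :=
  (hf.fderiv_right (by simp)).clm_apply contDiff_const

lemma contDiff_dT {f : ℝ × ℝ → ℝ} (hf : ContDiff ℝ (⊤ : ℕ∞) f) : ContDiff ℝ (⊤ : ℕ∞) (dT f) :=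
  (hf.fderiv_right (by simp)).clm_apply contDiff_const

lemma dT_dX_comm {f : ℝ × ℝ → ℝ} (hf : ContDiff ℝ (⊤ : ℕ∞) f) (z : ℝ × ℝ) :
    dT (dX f) z = dX (dT f) z := by
  have hd : DifferentiableAt ℝ (fderiv ℝ f) z :=
    ((hf.fderiv_right (m := (⊤ : ℕ∞)) (by simp)).differentiable (by simp)) z
  have hX : fderiv ℝ (fun w => fderiv ℝ f w (1, 0)) z
      = (fderiv ℝ f z).comp (fderiv ℝ (fun _ : ℝ × ℝ => ((1 : ℝ), (0 : ℝ))) z)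
        + (fderiv ℝ (fderiv ℝ f) z).flip (1, 0) :=
    fderiv_clm_apply hd (differentiableAt_const _)
  have hT : fderiv ℝ (fun w => fderiv ℝ f w (0, 1)) z
      = (fderiv ℝ f z).comp (fderiv ℝ (fun _ : ℝ × ℝ => ((0 : ℝ), (1 : ℝ))) z)
        + (fderiv ℝ (fderiv ℝ f) z).flip (0, 1) :=
    fderiv_clm_apply hd (differentiableAt_const _)
  have hsym : fderiv ℝ (fderiv ℝ f) z (0, 1) (1, 0)
      = fderiv ℝ (fderiv ℝ f) z (1, 0) (0, 1) :=
    (hf.contDiffAt.isSymmSndFDerivAt (by rw [minSmoothness_of_isRCLikeNormedField]; exact WithTop.coe_le_coe.mpr le_top)) _ _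
  show fderiv ℝ (fun w => fderiv ℝ f w (1, 0)) z (0, 1)
      = fderiv ℝ (fun w => fderiv ℝ f w (0, 1)) z (1, 0)
  rw [hX, hT]
  simp only [fderiv_const, fderiv_const_apply, Pi.zero_apply, ContinuousLinearMap.add_apply,
    ContinuousLinearMap.comp_apply, ContinuousLinearMap.zero_apply,
    ContinuousLinearMap.flip_apply, map_zero, zero_add]
  exact hsym

lemma dX_add {f g : ℝ × ℝ → ℝ} {z : ℝ × ℝ} (hf : DifferentiableAt ℝ f z)
    (hg : DifferentiableAt ℝ g z) :
    dX (fun w => f w + g w) z = dX f z + dX g z := by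
  simp [dX, fderiv_fun_add hf hg]

lemma dX_sub {f g : ℝ × ℝ → ℝ} {z : ℝ × ℝ} (hf : DifferentiableAt ℝ f z)
    (hg : DifferentiableAt ℝ g z) :
    dX (fun w => f w - g w) z = dX f z - dX g z := by
  simp [dX, fderiv_fun_sub hf hg]

lemma dX_mul {f g : ℝ × ℝ → ℝ} {z : ℝ × ℝ} (hf : DifferentiableAt ℝ f z)
    (hg : DifferentiableAt ℝ g z) :
    dX (fun w => f w * g w) z = dX f z * g z + f z * dX g z := by
  simp only [dX, fderiv_fun_mul hf hg, ContinuousLinearMap.add_apply,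
    ContinuousLinearMap.smul_apply, smul_eq_mul]
  ring

lemma dX_mul_const {f : ℝ × ℝ → ℝ} {z : ℝ × ℝ} (hf : DifferentiableAt ℝ f z) (d : ℝ) :
    dX (fun w => f w * d) z = dX f z * d := by
  simp only [dX, fderiv_mul_const hf, ContinuousLinearMap.smul_apply, smul_eq_mul]
  ring

lemma dX_mu {β : ℝ} {c : ℝ × ℝ → ℝ} (hc : ContDiff ℝ (⊤ : ℕ∞) c) (z : ℝ × ℝ) :
    dX (fun w => ((c w) ^ 3 - c w) + c w / β) z
      = (3 * (c z) ^ 2 - 1 + 1 / β) * dX c z := by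
  have hca : ∀ w, DifferentiableAt ℝ c w := fun w => hc.differentiable (by simp) w
  have h1 : (fun w => ((c w) ^ 3 - c w) + c w / β)
      = fun w => (c w * (c w * c w) - c w) + c w * (1 / β) := by
    funext w; ring
  rw [h1, dX_add (f := fun w => c w * (c w * c w) - c w) (g := fun w => c w * (1 / β))
    (((hca z).mul ((hca z).mul (hca z))).sub (hca z))
    ((hca z).mul_const _),
    dX_sub (f := fun w => c w * (c w * c w)) ((hca z).mul ((hca z).mul (hca z))) (hca z),
    dX_mul (g := fun w => c w * c w) (hca z) ((hca z).mul (hca z)), dX_mul (hca z) (hca z),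
    dX_mul_const (hca z)]
  ring

/-- Energy dissipation for the one-dimensional relaxed friction-type
approximation of the Navier–Stokes–Cahn–Hilliard system, with
`W(c) = (1/4)(c² − 1)²` and relaxation variable `ω` determined by the elliptic
constraint `−γ ∂ₓₓω + ω/β = c/β`: under homogeneous boundary conditions the
relaxed energy `∫ₐᵇ (α/2)p² + (1/2)u² + (δ/2)v² + W(c) + (1/(2β))(c−ω)² +
(γ/2)(∂ₓω)² dx` has time derivative `−∫ₐᵇ (v² + ν (∂ₓu)²) dx ≤ 0`. -/
theorem relaxed_friction_type_energy_dissipation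
    (α β δ ν γ : ℝ) (hα : 0 < α) (hβ : 0 < β) (hδ : 0 < δ) (hν : 0 < ν)
    (hγ : 0 < γ) (a b T : ℝ) (hab : a < b) (hT : 0 < T)
    (p u c v ω : ℝ × ℝ → ℝ)
    (hp : ContDiff ℝ (⊤ : ℕ∞) p) (hu : ContDiff ℝ (⊤ : ℕ∞) u) (hc : ContDiff ℝ (⊤ : ℕ∞) c)
    (hv : ContDiff ℝ (⊤ : ℕ∞) v) (hω : ContDiff ℝ (⊤ : ℕ∞) ω)
    (heq1 : ∀ x ∈ Set.Icc a b, ∀ t ∈ Set.Ioo 0 T,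
      dT p (x, t) + (1 / α) * dX u (x, t) = 0)
    (heq2 : ∀ x ∈ Set.Icc a b, ∀ t ∈ Set.Ioo 0 T,
      dT u (x, t) + (3 / 2) * u (x, t) * dX u (x, t) + dX p (x, t)
          + c (x, t) * dX (fun z => ((c z) ^ 3 - c z) + c z / β) (x, t)
        = (1 / β) * c (x, t) * dX ω (x, t) + ν * dX (dX u) (x, t))
    (heq3 : ∀ x ∈ Set.Icc a b, ∀ t ∈ Set.Ioo 0 T,
      dT c (x, t) + dX (fun z => c z * u z) (x, t) + dX v (x, t) = 0)
    (heq4 : ∀ x ∈ Set.Icc a b, ∀ t ∈ Set.Ioo 0 T,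
      dT v (x, t) + (1 / δ) * dX (fun z => ((c z) ^ 3 - c z) + c z / β) (x, t)
        = -(1 / δ) * v (x, t) + (1 / (δ * β)) * dX ω (x, t))
    (hell : ∀ x ∈ Set.Icc a b, ∀ t ∈ Set.Ioo 0 T,
      -(γ * dX (dX ω) (x, t)) + (1 / β) * ω (x, t) = (1 / β) * c (x, t))
    (hbu : ∀ t ∈ Set.Ioo 0 T, u (a, t) = 0 ∧ u (b, t) = 0)
    (hbv : ∀ t ∈ Set.Ioo 0 T, v (a, t) = 0 ∧ v (b, t) = 0)
    (hbω : ∀ t ∈ Set.Ioo 0 T, dX ω (a, t) = 0 ∧ dX ω (b, t) = 0) :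
    ∀ t ∈ Set.Ioo 0 T,
      HasDerivAt (fun s => ∫ x in a..b,
          ((α / 2) * (p (x, s)) ^ 2 + (1 / 2) * (u (x, s)) ^ 2
            + (δ / 2) * (v (x, s)) ^ 2 + (1 / 4) * ((c (x, s)) ^ 2 - 1) ^ 2
            + (1 / (2 * β)) * (c (x, s) - ω (x, s)) ^ 2
            + (γ / 2) * (dX ω (x, s)) ^ 2))
        (-∫ x in a..b, ((v (x, t)) ^ 2 + ν * (dX u (x, t)) ^ 2)) t
      ∧ (-∫ x in a..b, ((v (x, t)) ^ 2 + ν * (dX u (x, t)) ^ 2)) ≤ 0 := by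
  -- continuity facts for all atoms
  have hCp : Continuous p := hp.continuous
  have hCu : Continuous u := hu.continuous
  have hCc : Continuous c := hc.continuous
  have hCv : Continuous v := hv.continuous
  have hCω : Continuous ω := hω.continuous
  have hCdXp : Continuous (dX p) := (contDiff_dX hp).continuous
  have hCdXu : Continuous (dX u) := (contDiff_dX hu).continuous
  have hCdXc : Continuous (dX c) := (contDiff_dX hc).continuous
  have hCdXv : Continuous (dX v) := (contDiff_dX hv).continuous
  have hCdXω : Continuous (dX ω) := (contDiff_dX hω).continuous
  have hCdXXu : Continuous (dX (dX u)) := (contDiff_dX (contDiff_dX hu)).continuous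
  have hCdXXω : Continuous (dX (dX ω)) := (contDiff_dX (contDiff_dX hω)).continuous
  have hCdTp : Continuous (dT p) := (contDiff_dT hp).continuous
  have hCdTu : Continuous (dT u) := (contDiff_dT hu).continuous
  have hCdTc : Continuous (dT c) := (contDiff_dT hc).continuous
  have hCdTv : Continuous (dT v) := (contDiff_dT hv).continuous
  have hCdTω : Continuous (dT ω) := (contDiff_dT hω).continuous
  have hCdTXω : Continuous (dT (dX ω)) := (contDiff_dT (contDiff_dX hω)).continuous
  have hCdXTω : Continuous (dX (dT ω)) := (contDiff_dX (contDiff_dT hω)).continuous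
  intro t ht
  have hQnn : (0:ℝ) ≤ ∫ x in a..b, ((v (x, t)) ^ 2 + ν * (dX u (x, t)) ^ 2) :=
    intervalIntegral.integral_nonneg hab.le (fun x _ => by positivity)
  refine ⟨?_, neg_nonpos.mpr hQnn⟩
  set eT : ℝ × ℝ → ℝ := fun z =>
    α * p z * dT p z + u z * dT u z + δ * v z * dT v z
      + ((c z) ^ 3 - c z) * dT c z
      + (1 / β) * (c z - ω z) * (dT c z - dT ω z)
      + γ * dX ω z * dT (dX ω) z with heT
  have heTcont : Continuous eT := by
    rw [heT]; fun_prop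
  -- Claim A : time-slice derivative of the energy density
  have hA : ∀ x s : ℝ, HasDerivAt (fun r =>
      ((α / 2) * (p (x, r)) ^ 2 + (1 / 2) * (u (x, r)) ^ 2
        + (δ / 2) * (v (x, r)) ^ 2 + (1 / 4) * ((c (x, r)) ^ 2 - 1) ^ 2
        + (1 / (2 * β)) * (c (x, r) - ω (x, r)) ^ 2
        + (γ / 2) * (dX ω (x, r)) ^ 2)) (eT (x, s)) s := by
    intro x s
    have h1 := slice_hasDerivAt_T hp x s
    have h2 := slice_hasDerivAt_T hu x s
    have h3 := slice_hasDerivAt_T hc x s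
    have h4 := slice_hasDerivAt_T hv x s
    have h5 := slice_hasDerivAt_T hω x s
    have h6 := slice_hasDerivAt_T (contDiff_dX hω) x s
    have H := ((((((h1.pow 2).const_mul (α/2)).add ((h2.pow 2).const_mul (1/2))).add
      ((h4.pow 2).const_mul (δ/2))).add
      ((((h3.pow 2).sub_const 1).pow 2).const_mul (1/4))).add
      (((h3.sub h5).pow 2).const_mul (1/(2*β)))).add ((h6.pow 2).const_mul (γ/2))
    refine H.congr_deriv ?_
    rw [heT]
    simp only [Pi.pow_apply, Pi.sub_apply, Pi.mul_apply, Pi.add_apply, Pi.neg_apply]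
    push_cast
    ring
  -- the slice-in-x function g and its derivative ψ
  set ψ : ℝ → ℝ := fun x =>
    -(dX p (x,t) * u (x,t) + p (x,t) * dX u (x,t))
      - (3/2) * (u (x,t))^2 * dX u (x,t)
      + ν * (dX u (x,t) * dX u (x,t) + u (x,t) * dX (dX u) (x,t))
      - (3 * (c (x,t))^2 * dX c (x,t) - dX c (x,t)
          + (1/β) * (dX c (x,t) - dX ω (x,t))) * (c (x,t) * u (x,t) + v (x,t))
      - ((c (x,t))^3 - c (x,t) + (1/β) * (c (x,t) - ω (x,t)))
          * (dX c (x,t) * u (x,t) + c (x,t) * dX u (x,t) + dX v (x,t))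
      + γ * (dX (dX ω) (x,t) * dT ω (x,t) + dX ω (x,t) * dX (dT ω) (x,t)) with hψ
  set g : ℝ → ℝ := fun y =>
    -(p (y,t) * u (y,t)) - (1/2) * (u (y,t))^3 + ν * (u (y,t) * dX u (y,t))
      - ((c (y,t))^3 - c (y,t) + (1/β) * (c (y,t) - ω (y,t)))
          * (c (y,t) * u (y,t) + v (y,t))
      + γ * (dX ω (y,t) * dT ω (y,t)) with hg
  have hgd : ∀ x : ℝ, HasDerivAt g (ψ x) x := by
    intro x
    have hXp := slice_hasDerivAt_X hp x t
    have hXu := slice_hasDerivAt_X hu x t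
    have hXc := slice_hasDerivAt_X hc x t
    have hXv := slice_hasDerivAt_X hv x t
    have hXω := slice_hasDerivAt_X hω x t
    have hXdXu := slice_hasDerivAt_X (contDiff_dX hu) x t
    have hXdXω := slice_hasDerivAt_X (contDiff_dX hω) x t
    have hXdTω := slice_hasDerivAt_X (contDiff_dT hω) x t
    have H := (((((hXp.mul hXu).neg.sub ((hXu.pow 3).const_mul (1/2))).add
      ((hXu.mul hXdXu).const_mul ν)).sub
      ((((hXc.pow 3).sub hXc).add ((hXc.sub hXω).const_mul (1/β))).mul
        ((hXc.mul hXu).add hXv))).add ((hXdXω.mul hXdTω).const_mul γ))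
    refine H.congr_deriv ?_
    rw [hψ]
    simp only [Pi.pow_apply, Pi.sub_apply, Pi.mul_apply, Pi.add_apply, Pi.neg_apply]
    push_cast
    ring
  have hψcont : Continuous ψ := by rw [hψ]; fun_prop
  have hFTC : ∫ x in a..b, ψ x = g b - g a :=
    intervalIntegral.integral_eq_sub_of_hasDerivAt (fun x _ => hgd x)
      (hψcont.intervalIntegrable a b)
  have hga : g a = 0 := by
    simp only [hg]
    rw [(hbu t ht).1, (hbv t ht).1, (hbω t ht).1]
    ring
  have hgb : g b = 0 := by
    simp only [hg]
    rw [(hbu t ht).2, (hbv t ht).2, (hbω t ht).2]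
    ring
  -- Claim C2 : pointwise identity from the PDE system
  have hC2 : Set.EqOn (fun x => eT (x,t))
      (fun x => ψ x - ((v (x, t)) ^ 2 + ν * (dX u (x, t)) ^ 2)) (Set.uIcc a b) := by
    intro x hx
    rw [Set.uIcc_of_le hab.le] at hx
    have e1 := heq1 x hx t ht
    have e2 := heq2 x hx t ht
    have e3 := heq3 x hx t ht
    have e4 := heq4 x hx t ht
    have e5 := hell x hx t ht
    rw [dX_mu hc (x,t)] at e2 e4
    rw [dX_mul (hc.differentiable (by simp) (x,t)) (hu.differentiable (by simp) (x,t))] at e3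
    have E1 : dT p (x,t) = -(1/α) * dX u (x,t) := by linarith
    have E2 : dT u (x,t) = (1/β) * c (x,t) * dX ω (x,t) + ν * dX (dX u) (x,t)
        - (3/2) * u (x,t) * dX u (x,t) - dX p (x,t)
        - c (x,t) * ((3 * (c (x,t))^2 - 1 + 1/β) * dX c (x,t)) := by linarith
    have E3 : dT c (x,t) = -(dX c (x,t) * u (x,t) + c (x,t) * dX u (x,t)) - dX v (x,t) := by
      linarith
    have E4 : dT v (x,t) = -(1/δ) * ((3 * (c (x,t))^2 - 1 + 1/β) * dX c (x,t))
        - (1/δ) * v (x,t) + (1/(δ*β)) * dX ω (x,t) := by linarith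
    have E5 : dX (dX ω) (x,t) = (ω (x,t) - c (x,t)) / (β * γ) := by
      have hβ' : β ≠ 0 := hβ.ne'
      field_simp at e5
      rw [eq_div_iff (mul_pos hβ hγ).ne']
      linarith
    have Ecomm : dT (dX ω) (x,t) = dX (dT ω) (x,t) := dT_dX_comm hω (x,t)
    have hα' : α ≠ 0 := hα.ne'
    have hβ' : β ≠ 0 := hβ.ne'
    have hδ' : δ ≠ 0 := hδ.ne'
    have hγ' : γ ≠ 0 := hγ.ne'
    simp only [heT, hψ]
    rw [E1, E2, E3, E4, E5, Ecomm]
    field_simp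
    ring
  have hIntψ : IntervalIntegrable ψ MeasureTheory.volume a b := hψcont.intervalIntegrable a b
  have hIntQ : IntervalIntegrable (fun x => (v (x, t)) ^ 2 + ν * (dX u (x, t)) ^ 2)
      MeasureTheory.volume a b := by
    apply Continuous.intervalIntegrable
    fun_prop
  have hEq : (∫ x in a..b, eT (x,t))
      = -∫ x in a..b, ((v (x, t)) ^ 2 + ν * (dX u (x, t)) ^ 2) := by
    rw [intervalIntegral.integral_congr hC2, intervalIntegral.integral_sub hIntψ hIntQ,
      hFTC, hga, hgb]
    ring
  -- differentiation under the integral sign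
  obtain ⟨M, hM⟩ := (isCompact_uIcc.prod (isCompact_closedBall t 1)).exists_bound_of_continuousOn
    heTcont.continuousOn
  have hEc : Continuous (fun z : ℝ × ℝ =>
      ((α / 2) * (p z) ^ 2 + (1 / 2) * (u z) ^ 2
        + (δ / 2) * (v z) ^ 2 + (1 / 4) * ((c z) ^ 2 - 1) ^ 2
        + (1 / (2 * β)) * (c z - ω z) ^ 2
        + (γ / 2) * (dX ω z) ^ 2)) := by fun_prop
  have key := intervalIntegral.hasDerivAt_integral_of_dominated_loc_of_deriv_le
    (F := fun s x => ((α / 2) * (p (x, s)) ^ 2 + (1 / 2) * (u (x, s)) ^ 2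
            + (δ / 2) * (v (x, s)) ^ 2 + (1 / 4) * ((c (x, s)) ^ 2 - 1) ^ 2
            + (1 / (2 * β)) * (c (x, s) - ω (x, s)) ^ 2
            + (γ / 2) * (dX ω (x, s)) ^ 2))
    (F' := fun s x => eT (x, s)) (x₀ := t) (a := a) (b := b)
    (μ := MeasureTheory.volume) (bound := fun _ => M) (s := Metric.ball t 1) (Metric.ball_mem_nhds t one_pos)
    (Filter.Eventually.of_forall (fun s =>
      ((hEc.comp (continuous_id.prodMk continuous_const)).aestronglyMeasurable)))
    ((hEc.comp (continuous_id.prodMk continuous_const)).intervalIntegrable a b)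
    ((heTcont.comp (continuous_id.prodMk continuous_const)).aestronglyMeasurable)
    (Filter.Eventually.of_forall (fun x hx s hs => by
      exact hM (x, s) ⟨Set.uIoc_subset_uIcc hx, Metric.ball_subset_closedBall hs⟩))
    (intervalIntegrable_const)
    (Filter.Eventually.of_forall (fun x _ s _ => hA x s))
  have h2 := key.2
  rw [hEq] at h2
  exact h2
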